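/- arXiv:1706.01297 — 2 statements merged into one kernel-verified Lean document; each statement's English description precedes it below -/
import Mathlib

section
/- Let n, m, p be positive integers with m ≥ 2p. A homogeneous polynomial u of degree m on ℂⁿ satisfies Δᵖu = 0 (i.e. u ∈ ℋ_m^p(ℂⁿ)) if and only if there exist uniquely determined harmonic homogeneous polynomials u_k ∈ ℋ_{m−2k}(ℂⁿ) of degree m−2k, for k = 0, 1, …, p−1, such that u(x) = Σ_{k=0}^{p−1} |x|^{2k} u_k(x) for all x ∈ ℂⁿ. If instead m < 2p, the same equivalence holds with the sum running over k = 0, 1, …, ⌊m/2⌋. -/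
/-!
For `h` harmonic and homogeneous of degree `e`,
`Δ(|x|^{2k+2} h) = 2(k+1)(n+2e+2k) |x|^{2k} h`, with a nonzero constant since `n > 0`.
Inverting `Δ` term by term gives, by induction on the degree, the Fischer expansion
`u = ∑_{k ≤ m/2} |x|^{2k} h_k` of every homogeneous `u`, and applying `Δ` to a vanishing
expansion shows inductively that all its terms vanish, so expansions are unique.
`Δᵖ` kills the terms with `k < p` and sends the others to nonzero multiples of
`|x|^{2(k-p)} h_k`; hence `Δᵖ u = 0` exactly when `h_k = 0` for all `k ≥ p`.
-/

open MeasureTheory Complex Filter Finset Metric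
open scoped ENNReal Topology

noncomputable section

/-- `ℂⁿ` -/
abbrev Cn (n : ℕ) := Fin n → ℂ

/-- `ℝⁿ` with the euclidean norm -/
abbrev Rn (n : ℕ) := EuclideanSpace ℝ (Fin n)

/-- embedding of `ℝⁿ` into `ℂⁿ` -/
def toC {n : ℕ} (x : Rn n) : Cn n := fun j => (x j : ℂ)

/-- `|z|² = ∑ zⱼ²`, the complex-bilinear extension of the squared euclidean norm -/
def cnsq {n : ℕ} (z : Cn n) : ℂ := ∑ j, (z j) ^ 2

/-- the bilinear dot product `z ⬝ w = ∑ zⱼ wⱼ` -/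
def cdot {n : ℕ} (z w : Cn n) : ℂ := ∑ j, z j * w j

/-- componentwise complex conjugation -/
def conjC {n : ℕ} (z : Cn n) : Cn n := fun j => (starRingEnd ℂ) (z j)

/-- the hermitian norm `‖z‖ = (∑ |zⱼ|²)^(1/2)` on `ℂⁿ` -/
def hnorm {n : ℕ} (z : Cn n) : ℝ := Real.sqrt (∑ j, ‖z j‖ ^ 2)

/-- the principal square root `|z| = (∑ zⱼ²)^(1/2)`, complex extension of the euclidean norm -/
def cnorm {n : ℕ} (z : Cn n) : ℂ := cnsq z ^ ((1 : ℂ)/2)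

/-- `Ŝ_p = ⋃_{k<p} e^{kπi/p} S`, union of rotated unit spheres -/
def Shat (n p : ℕ) : Set (Cn n) :=
  {z | ∃ k < p, ∃ x : Rn n, ‖x‖ = 1 ∧ z = Complex.exp (k * Real.pi * Complex.I / p) • toC x}

/-- `B̂_p = ⋃_{k<p} e^{kπi/p} B`, union of rotated open unit balls -/
def Bhat (n p : ℕ) : Set (Cn n) :=
  {z | ∃ k < p, ∃ x : Rn n, ‖x‖ < 1 ∧ z = Complex.exp (k * Real.pi * Complex.I / p) • toC x}

/-- the complexified Laplacian on polynomials, `Δ = ∑ ∂²/∂xⱼ²` -/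
def lapP (n : ℕ) : MvPolynomial (Fin n) ℂ →ₗ[ℂ] MvPolynomial (Fin n) ℂ :=
  ∑ j : Fin n, ((MvPolynomial.pderiv j).toLinearMap ∘ₗ (MvPolynomial.pderiv j).toLinearMap)

/-- the polynomial `|x|² = ∑ xⱼ²` -/
def nsqPoly (n : ℕ) : MvPolynomial (Fin n) ℂ := ∑ j : Fin n, (MvPolynomial.X j) ^ 2

/-- `ℋ_m^p(ℂⁿ)`: homogeneous polynomials of degree `m` that are polyharmonic of order `p` -/
def Hmp (n m p : ℕ) : Submodule ℂ (MvPolynomial (Fin n) ℂ) :=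
  MvPolynomial.homogeneousSubmodule (Fin n) ℂ m ⊓ LinearMap.ker ((lapP n) ^ p)

/-- the normalised surface-area measure `σ` on the unit sphere `S ⊂ ℝⁿ` -/
def sphMeasure (n : ℕ) : Measure (sphere (0 : Rn n) 1) :=
  ((volume : Measure (Rn n)).toSphere Set.univ)⁻¹ • (volume : Measure (Rn n)).toSphere

/-- the inner product `⟨f,g⟩_{Ŝ_p} = (1/p) ∫_S ∑_j f(e^{jπi/p}ζ) conj(g(e^{jπi/p}ζ)) dσ(ζ)` -/
def innerShat (n p : ℕ) (f g : Cn n → ℂ) : ℂ :=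
  (p : ℂ)⁻¹ * ∫ ζ : sphere (0 : Rn n) 1, ∑ j ∈ Finset.range p,
      f (Complex.exp (j * Real.pi * Complex.I / p) • toC (ζ : Rn n)) *
        (starRingEnd ℂ) (g (Complex.exp (j * Real.pi * Complex.I / p) • toC (ζ : Rn n)))
    ∂(sphMeasure n)

/-- the measure on `ℂⁿ` representing `L²(Ŝ_p)`: the average of the `p` rotated copies of `σ` -/
def muShat (n p : ℕ) : Measure (Cn n) :=
  (p : ℝ≥0∞)⁻¹ • ∑ j ∈ Finset.range p,
    Measure.map (fun ζ : sphere (0 : Rn n) 1 =>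
      Complex.exp (j * Real.pi * Complex.I / p) • toC (ζ : Rn n)) (sphMeasure n)

/-- the Poisson kernel `P_p(x,ζ) = (1-|x|^{2p})/(x²ζ̄² - 2x⬝ζ̄ + 1)^{n/2}` for `B̂_p` -/
def PoissonK (n p : ℕ) (x ζ : Cn n) : ℂ :=
  (1 - (cnsq x) ^ p) / (cnsq x * cnsq (conjC ζ) - 2 * cdot x (conjC ζ) + 1) ^ ((n : ℂ)/2)

/-- the Poisson integral `P_p[f](x) = ⟨f, P_p(·,x)⟩_{Ŝ_p}` -/
def PInt (n p : ℕ) (f : Cn n → ℂ) (x : Cn n) : ℂ :=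
  innerShat n p f (fun ζ => PoissonK n p ζ x)

/-- the complexified Laplacian, through the real parametrisation of a rotated ball -/
def lapRe (n : ℕ) (g : Rn n → ℂ) : Rn n → ℂ := fun y =>
  ∑ j : Fin n, fderiv ℝ (fun z => fderiv ℝ g z (EuclideanSpace.single j 1)) y
    (EuclideanSpace.single j 1)

/-- the `L`-functional: `L(z) = sqrt(‖z‖² + sqrt(‖z‖⁴ - |z²|²))` -/
def Lnorm {n : ℕ} (z : Cn n) : ℝ :=
  Real.sqrt (hnorm z ^ 2 + Real.sqrt (hnorm z ^ 4 - ‖cnsq z‖ ^ 2))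

/-- the Lie ball `LB` -/
def LBall (n : ℕ) : Set (Cn n) := {z | Lnorm z < 1}

/-- the Lie sphere `LS` -/
def LSphere (n : ℕ) : Set (Cn n) :=
  {z | ∃ φ : ℝ, ∃ x : Rn n, ‖x‖ = 1 ∧ z = Complex.exp (φ * Complex.I) • toC x}

/-- the Cauchy-Hua kernel `H(z,w) = (w̄²z² - 2w̄⬝z + 1)^{-n/2}` -/
def Hua (n : ℕ) (z w : Cn n) : ℂ :=
  (cnsq (conjC w) * cnsq z - 2 * cdot (conjC w) z + 1) ^ (-(n : ℂ)/2)

/-- the Gegenbauer polynomial `C_m^λ(t)` -/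
def gegen (lam : ℂ) (m : ℕ) (t : ℂ) : ℂ :=
  ∑ k ∈ Finset.range (m / 2 + 1),
    (-1) ^ k * Complex.Gamma ((m : ℂ) + lam - k) /
      ((Nat.factorial k : ℂ) * (Nat.factorial (m - 2 * k) : ℂ) * Complex.Gamma lam) *
      (2 * t) ^ (m - 2 * k)

open MvPolynomial

section Laplacian

variable {n : ℕ}

theorem lapP_apply (f : MvPolynomial (Fin n) ℂ) :
    lapP n f = ∑ j : Fin n, pderiv j (pderiv j f) := by
  simp [lapP, LinearMap.sum_apply]

theorem isHomogeneous_lapP {u : MvPolynomial (Fin n) ℂ} {m : ℕ} (hu : u.IsHomogeneous m) :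
    (lapP n u).IsHomogeneous (m - 2) := by
  rw [lapP_apply]
  exact IsHomogeneous.sum _ _ _ fun j _ => Nat.sub_sub m 1 1 ▸ hu.pderiv.pderiv

theorem lapP_eq_zero_of_isHomogeneous_of_le_one {u : MvPolynomial (Fin n) ℂ} {m : ℕ}
    (hu : u.IsHomogeneous m) (hm : m ≤ 1) : lapP n u = 0 := by
  rw [lapP_apply]
  refine Finset.sum_eq_zero fun j _ => ?_
  have hconst : (pderiv j u).IsHomogeneous 0 := by
    simpa [Nat.sub_eq_zero_of_le hm] using hu.pderiv
  rw [← totalDegree_zero_iff_isHomogeneous, totalDegree_eq_zero_iff_eq_C] at hconst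
  rw [hconst, pderiv_C]

theorem pderiv_nsqPoly (j : Fin n) : pderiv j (nsqPoly n) = 2 * X j := by
  rw [nsqPoly, map_sum, Finset.sum_eq_single j (fun i _ hij => by simp [pderiv_X_of_ne hij])
    (by simp), pderiv_pow, pderiv_X_self]
  simp

theorem isHomogeneous_nsqPoly : (nsqPoly n).IsHomogeneous 2 :=
  IsHomogeneous.sum _ _ _ fun j _ => isHomogeneous_X_pow j 2

theorem lapP_nsqPoly_mul {w : MvPolynomial (Fin n) ℂ} {d : ℕ} (hw : w.IsHomogeneous d) :
    lapP n (nsqPoly n * w) = (2 * n + 4 * d : ℂ) • w + nsqPoly n * lapP n w := by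
  have hj : ∀ j : Fin n, pderiv j (pderiv j (nsqPoly n * w)) =
      2 * w + 4 * (X j * pderiv j w) + nsqPoly n * pderiv j (pderiv j w) := fun j => by
    simp only [pderiv_mul, pderiv_nsqPoly, map_add, pderiv_X_self, mul_one,
      show pderiv j (2 : MvPolynomial (Fin n) ℂ) = 0 from pderiv_C (a := 2)]
    ring
  rw [lapP_apply, lapP_apply, Finset.sum_congr rfl fun j _ => hj j, Finset.sum_add_distrib,
    Finset.sum_add_distrib, ← Finset.mul_sum, ← Finset.mul_sum, hw.sum_X_mul_pderiv]
  simp only [smul_eq_C_mul, map_add, map_mul, map_natCast, map_ofNat, nsmul_eq_mul,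
    Finset.sum_const, Finset.card_univ, Fintype.card_fin, Finset.mul_sum]
  ring

section Harmonic

variable {h : MvPolynomial (Fin n) ℂ} {e : ℕ}

theorem lapP_nsqPoly_pow_succ_mul (hh : h.IsHomogeneous e) (hΔ : lapP n h = 0) (k : ℕ) :
    lapP n (nsqPoly n ^ (k + 1) * h) =
      (2 * (k + 1) * (n + 2 * e + 2 * k) : ℂ) • (nsqPoly n ^ k * h) := by
  induction k with
  | zero =>
    simp only [zero_add, pow_one, pow_zero, one_mul, lapP_nsqPoly_mul hh, hΔ, mul_zero, add_zero]
    congr 1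
    push_cast
    ring
  | succ k ih =>
    have hdeg : (nsqPoly n ^ (k + 1) * h).IsHomogeneous (2 * (k + 1) + e) :=
      (isHomogeneous_nsqPoly.pow (k + 1)).mul hh
    rw [pow_succ', mul_assoc, lapP_nsqPoly_mul hdeg, ih, mul_smul_comm, ← mul_assoc, ← pow_succ',
      ← add_smul]
    push_cast
    ring_nf

theorem two_mul_succ_mul_add_ne_zero (hn : 0 < n) (k : ℕ) :
    (2 * (k + 1) * (n + 2 * e + 2 * k) : ℂ) ≠ 0 := by
  exact_mod_cast (by positivity : (2 * (k + 1) * (n + 2 * e + 2 * k) : ℕ) ≠ 0)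

theorem lapP_pow_nsqPoly_pow_mul_of_lt (hh : h.IsHomogeneous e) (hΔ : lapP n h = 0) {j k : ℕ}
    (hkj : k < j) : (lapP n ^ j) (nsqPoly n ^ k * h) = 0 := by
  obtain ⟨i, rfl⟩ := Nat.exists_eq_add_of_lt hkj
  suffices (lapP n ^ (k + 1)) (nsqPoly n ^ k * h) = 0 by
    rw [show k + i + 1 = i + (k + 1) by omega, pow_add, Module.End.mul_apply, this, map_zero]
  clear hkj
  induction k with
  | zero => simpa using hΔ
  | succ k ih =>
    rw [pow_succ, Module.End.mul_apply, lapP_nsqPoly_pow_succ_mul hh hΔ, map_smul, ih, smul_zero]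

theorem exists_lapP_pow_nsqPoly_pow_mul_of_le (hn : 0 < n) (hh : h.IsHomogeneous e)
    (hΔ : lapP n h = 0) {j k : ℕ} (hjk : j ≤ k) :
    ∃ c : ℂ, c ≠ 0 ∧ (lapP n ^ j) (nsqPoly n ^ k * h) = c • (nsqPoly n ^ (k - j) * h) := by
  induction j generalizing k with
  | zero => exact ⟨1, one_ne_zero, by simp⟩
  | succ j ih =>
    obtain ⟨k, rfl⟩ := Nat.exists_eq_add_of_lt hjk
    obtain ⟨c, hc, hj⟩ := ih (k := j + k) (by omega)
    refine ⟨_ * c, mul_ne_zero (two_mul_succ_mul_add_ne_zero (e := e) hn (j + k)) hc, ?_⟩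
    rw [pow_succ, Module.End.mul_apply, lapP_nsqPoly_pow_succ_mul hh hΔ, map_smul, hj, smul_smul]
    congr 3
    omega

end Harmonic

theorem eq_zero_of_sum_range_nsqPoly_pow_mul_eq_zero (hn : 0 < n)
    {h : ℕ → MvPolynomial (Fin n) ℂ} {e : ℕ → ℕ} (hh : ∀ k, (h k).IsHomogeneous (e k))
    (hΔ : ∀ k, lapP n (h k) = 0) {N : ℕ} (hsum : ∑ k ∈ range N, nsqPoly n ^ k * h k = 0)
    {k : ℕ} (hk : k < N) : h k = 0 := by
  induction N generalizing h e k with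
  | zero => omega
  | succ N ih =>
    have hΔsum : ∑ k ∈ range N, nsqPoly n ^ k *
        ((2 * (k + 1) * (n + 2 * e (k + 1) + 2 * k) : ℂ) • h (k + 1)) = 0 := by
      simpa [Finset.sum_range_succ', lapP_nsqPoly_pow_succ_mul (hh _) (hΔ _), hΔ,
        mul_smul_comm] using congrArg (lapP n) hsum
    have hsucc : ∀ k < N, h (k + 1) = 0 := fun k hk =>
      (smul_eq_zero.mp (ih (e := fun k => e (k + 1))
        (fun k => (homogeneousSubmodule (Fin n) ℂ _).smul_mem _ (hh (k + 1)))
        (fun k => by rw [map_smul, hΔ, smul_zero]) hΔsum hk)).resolve_left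
        (two_mul_succ_mul_add_ne_zero hn k)
    have hzero : h 0 = 0 := by
      rw [Finset.sum_range_succ', Finset.sum_eq_zero fun k hk => by
        rw [hsucc k (Finset.mem_range.mp hk), mul_zero]] at hsum
      simpa using hsum
    rcases k with _ | k
    · exact hzero
    · exact hsucc k (by omega)

theorem exists_harmonic_expansion (hn : 0 < n) {m : ℕ} {u : MvPolynomial (Fin n) ℂ}
    (hu : u.IsHomogeneous m) :
    ∃ h : ℕ → MvPolynomial (Fin n) ℂ,
      (∀ k, (h k).IsHomogeneous (m - 2 * k) ∧ lapP n (h k) = 0) ∧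
        u = ∑ k ∈ range (m / 2 + 1), nsqPoly n ^ k * h k := by
  induction m using Nat.strong_induction_on generalizing u with
  | _ m ih =>
  rcases le_or_gt m 1 with hm | hm
  · refine ⟨Pi.single 0 u, fun k => ?_, by simp [Nat.div_eq_of_lt (by omega : m < 2)]⟩
    rcases eq_or_ne k 0 with rfl | hk
    · simpa using ⟨hu, lapP_eq_zero_of_isHomogeneous_of_le_one hu hm⟩
    · simpa [hk] using isHomogeneous_zero (Fin n) ℂ _
  -- Invert `Δ` on the expansion of `Δu`, then correct by a harmonic term of degree `m`.
  obtain ⟨g, hg, hΔu⟩ := ih (m - 2) (by omega) (isHomogeneous_lapP hu)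
  set c : ℕ → ℂ := fun k => 2 * (k + 1) * (n + 2 * (m - 2 - 2 * k : ℕ) + 2 * k)
  set S := ∑ k ∈ range ((m - 2) / 2 + 1), nsqPoly n ^ (k + 1) * ((c k)⁻¹ • g k)
  have hgc : ∀ k, ((c k)⁻¹ • g k).IsHomogeneous (m - 2 - 2 * k) ∧ lapP n ((c k)⁻¹ • g k) = 0 :=
    fun k => ⟨(homogeneousSubmodule (Fin n) ℂ _).smul_mem _ (hg k).1,
      by rw [map_smul, (hg k).2, smul_zero]⟩
  have hS : S.IsHomogeneous m := IsHomogeneous.sum _ _ _ fun k hk => by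
    have := (isHomogeneous_nsqPoly.pow (k + 1)).mul (hgc k).1
    rwa [show 2 * (k + 1) + (m - 2 - 2 * k) = m by have := Finset.mem_range.mp hk; omega] at this
  have hΔS : lapP n S = lapP n u := by
    rw [hΔu, map_sum]
    refine Finset.sum_congr rfl fun k _ => ?_
    rw [lapP_nsqPoly_pow_succ_mul (hgc k).1 (hgc k).2, mul_smul_comm, smul_smul,
      mul_inv_cancel₀ (two_mul_succ_mul_add_ne_zero hn k), one_smul]
  refine ⟨fun | 0 => u - S | k + 1 => (c k)⁻¹ • g k, fun k => ?_, ?_⟩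
  · rcases k with _ | k
    · exact ⟨by simpa using hu.sub hS, by rw [map_sub, hΔS, sub_self]⟩
    · simpa only [show m - 2 * (k + 1) = m - 2 - 2 * k by omega] using hgc k
  · rw [show m / 2 + 1 = (m - 2) / 2 + 1 + 1 by omega, Finset.sum_range_succ']
    simp only [pow_zero, one_mul]
    rw [← add_sub_assoc, add_sub_cancel_left]

theorem eq_zero_of_lapP_pow_sum_range_nsqPoly_pow_mul_eq_zero (hn : 0 < n)
    {h : ℕ → MvPolynomial (Fin n) ℂ} {e : ℕ → ℕ} (hh : ∀ k, (h k).IsHomogeneous (e k))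
    (hΔ : ∀ k, lapP n (h k) = 0) {p M : ℕ}
    (hsum : (lapP n ^ p) (∑ k ∈ range M, nsqPoly n ^ k * h k) = 0) {k : ℕ} (hpk : p ≤ k)
    (hkM : k < M) : h k = 0 := by
  choose c hc hpow using fun j =>
    exists_lapP_pow_nsqPoly_pow_mul_of_le hn (hh (p + j)) (hΔ (p + j)) (Nat.le_add_right p j)
  rw [map_sum, ← Finset.sum_range_add_sum_Ico _ (by omega : p ≤ M),
    Finset.sum_eq_zero fun j hj => lapP_pow_nsqPoly_pow_mul_of_lt (hh j) (hΔ j)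
      (Finset.mem_range.mp hj), zero_add, Finset.sum_Ico_eq_sum_range] at hsum
  simp_rw [hpow, Nat.add_sub_cancel_left, ← mul_smul_comm] at hsum
  have := eq_zero_of_sum_range_nsqPoly_pow_mul_eq_zero hn
    (fun j => (homogeneousSubmodule (Fin n) ℂ _).smul_mem (c j) (hh (p + j)))
    (fun j => by rw [map_smul, hΔ, smul_zero]) hsum (k := k - p) (by omega)
  rwa [smul_eq_zero_iff_right (hc _), Nat.add_sub_cancel' hpk] at this

def IsAlmansiExpansion (m : ℕ) (u : MvPolynomial (Fin n) ℂ) {N : ℕ}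
    (v : Fin N → MvPolynomial (Fin n) ℂ) : Prop :=
  (∀ k : Fin N, (v k).IsHomogeneous (m - 2 * (k : ℕ)) ∧ lapP n (v k) = 0) ∧
    u = ∑ k : Fin N, nsqPoly n ^ (k : ℕ) * v k

namespace IsAlmansiExpansion

variable {m N : ℕ} {u : MvPolynomial (Fin n) ℂ} {v w : Fin N → MvPolynomial (Fin n) ℂ}

theorem lapP_pow_eq_zero (hv : IsAlmansiExpansion m u v) {p : ℕ} (hNp : N ≤ p) :
    (lapP n ^ p) u = 0 := by
  rw [hv.2, map_sum]
  exact Finset.sum_eq_zero fun k _ =>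
    lapP_pow_nsqPoly_pow_mul_of_lt (hv.1 k).1 (hv.1 k).2 (by omega)

theorem unique (hn : 0 < n) (hv : IsAlmansiExpansion m u v) (hw : IsAlmansiExpansion m u w) :
    v = w := by
  let d : ℕ → MvPolynomial (Fin n) ℂ := fun k => if hk : k < N then v ⟨k, hk⟩ - w ⟨k, hk⟩ else 0
  have hd : ∀ k : Fin N, d k = v k - w k := fun k => dif_pos k.isLt
  have hdh : ∀ k, (d k).IsHomogeneous (m - 2 * k) ∧ lapP n (d k) = 0 := fun k => by
    by_cases hk : k < N
    · simp only [d, dif_pos hk, map_sub, (hv.1 _).2, (hw.1 _).2, sub_self]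
      exact ⟨(hv.1 _).1.sub (hw.1 _).1, trivial⟩
    · simpa [d, hk] using isHomogeneous_zero (Fin n) ℂ _
  have hsum : ∑ k ∈ range N, nsqPoly n ^ k * d k = 0 := by
    rw [← Fin.sum_univ_eq_sum_range (fun k => nsqPoly n ^ k * d k)]
    simp_rw [hd, mul_sub, Finset.sum_sub_distrib, ← hv.2, ← hw.2, sub_self]
  funext k
  have := eq_zero_of_sum_range_nsqPoly_pow_mul_eq_zero hn (fun k => (hdh k).1)
    (fun k => (hdh k).2) hsum k.isLt
  rwa [hd, sub_eq_zero] at this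

end IsAlmansiExpansion

theorem exists_isAlmansiExpansion_of_lapP_pow_eq_zero (hn : 0 < n) {m p : ℕ}
    {u : MvPolynomial (Fin n) ℂ} (hu : u.IsHomogeneous m) (hΔ : (lapP n ^ p) u = 0) :
    ∃ v : Fin (min p (m / 2 + 1)) → MvPolynomial (Fin n) ℂ, IsAlmansiExpansion m u v := by
  obtain ⟨h, hh, hu_eq⟩ := exists_harmonic_expansion hn hu
  have hvanish : ∀ k, p ≤ k → k < m / 2 + 1 → h k = 0 :=
    fun k => eq_zero_of_lapP_pow_sum_range_nsqPoly_pow_mul_eq_zero hn (fun k => (hh k).1)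
      (fun k => (hh k).2) (hu_eq ▸ hΔ)
  refine ⟨fun k => h k, fun k => hh k, ?_⟩
  rw [Fin.sum_univ_eq_sum_range (fun k => nsqPoly n ^ k * h k), hu_eq]
  refine (Finset.sum_subset (Finset.range_subset_range.mpr (min_le_right _ _))
    fun k hk hkN => ?_).symm
  simp only [Finset.mem_range] at hk hkN
  rw [hvanish k (by omega) hk, mul_zero]

theorem lapP_pow_eq_zero_iff_existsUnique_isAlmansiExpansion (hn : 0 < n) {m p N : ℕ}
    (hN : N = min p (m / 2 + 1)) {u : MvPolynomial (Fin n) ℂ} (hu : u.IsHomogeneous m) :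
    (lapP n ^ p) u = 0 ↔ ∃! v : Fin N → MvPolynomial (Fin n) ℂ, IsAlmansiExpansion m u v := by
  subst hN
  refine ⟨fun hΔ => ?_, fun ⟨v, hv, _⟩ => hv.lapP_pow_eq_zero (min_le_left _ _)⟩
  obtain ⟨v, hv⟩ := exists_isAlmansiExpansion_of_lapP_pow_eq_zero hn hu hΔ
  exact ⟨v, hv, fun w hw => hw.unique hn hv⟩

end Laplacian

theorem almansi_homogeneous_general (n m p : ℕ) (hn : 0 < n)
    (u : MvPolynomial (Fin n) ℂ) (hu : u.IsHomogeneous m) :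
    (2 * p ≤ m →
      ((lapP n ^ p) u = 0 ↔
        ∃! v : Fin p → MvPolynomial (Fin n) ℂ,
          (∀ k : Fin p, (v k).IsHomogeneous (m - 2 * (k : ℕ)) ∧ lapP n (v k) = 0) ∧
            u = ∑ k : Fin p, nsqPoly n ^ (k : ℕ) * v k)) ∧
    (m < 2 * p →
      ((lapP n ^ p) u = 0 ↔
        ∃! v : Fin (m / 2 + 1) → MvPolynomial (Fin n) ℂ,
          (∀ k : Fin (m / 2 + 1), (v k).IsHomogeneous (m - 2 * (k : ℕ)) ∧ lapP n (v k) = 0) ∧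
            u = ∑ k : Fin (m / 2 + 1), nsqPoly n ^ (k : ℕ) * v k)) :=
  ⟨fun hpm => lapP_pow_eq_zero_iff_existsUnique_isAlmansiExpansion hn (by omega) hu,
    fun hmp => lapP_pow_eq_zero_iff_existsUnique_isAlmansiExpansion hn (by omega) hu⟩

/-- Almansi-type decomposition of homogeneous polyharmonic polynomials. -/
theorem almansi_homogeneous (n m p : ℕ) (hn : 0 < n) (hm : 0 < m) (hp : 0 < p)
    (u : MvPolynomial (Fin n) ℂ) (hu : u.IsHomogeneous m) :
    (2 * p ≤ m →
      ((lapP n ^ p) u = 0 ↔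
        ∃! v : Fin p → MvPolynomial (Fin n) ℂ,
          (∀ k : Fin p, (v k).IsHomogeneous (m - 2 * (k : ℕ)) ∧ lapP n (v k) = 0) ∧
            u = ∑ k : Fin p, nsqPoly n ^ (k : ℕ) * v k)) ∧
    (m < 2 * p →
      ((lapP n ^ p) u = 0 ↔
        ∃! v : Fin (m / 2 + 1) → MvPolynomial (Fin n) ℂ,
          (∀ k : Fin (m / 2 + 1), (v k).IsHomogeneous (m - 2 * (k : ℕ)) ∧ lapP n (v k) = 0) ∧
            u = ∑ k : Fin (m / 2 + 1), nsqPoly n ^ (k : ℕ) * v k)) :=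
  almansi_homogeneous_general n m p hn u hu
end
end

section
/- Let n, m, p be positive integers. The space ℋ_m^p(ℂⁿ) of homogeneous polynomials of degree m on ℂⁿ that are polyharmonic of order p is finite dimensional, and dim ℋ_m^p(ℂⁿ) = C(n+m−1, n−1) if m < 2p, while dim ℋ_m^p(ℂⁿ) = C(n+m−1, n−1) − C(n+m−2p−1, n−1) if m ≥ 2p, where C(a,b) denotes the binomial coefficient. -/
/-!
`ℋ_m^p` is the kernel of `Δ^p` on the homogeneous polynomials of degree `m`. For `m < 2p` it is
all of degree `m`, as `Δ^p` would lower the degree below zero. For `m ≥ 2p`, `Δ^p` maps degree `m` onto degree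
`m - 2p` and rank–nullity gives the formula. Surjectivity of `Δ` comes from
`Δ (x^β x_i²) = (β_i + 2)(β_i + 1) x^β + (monomials with a larger power of x_i)`,
so a downward induction on `β_i` puts every monomial `x^β` in the image.
-/

open MeasureTheory Complex Filter Finset Metric
open scoped ENNReal Topology

noncomputable section

namespace MvPolynomial

open Finsupp

variable {σ : Type*}

theorem finrank_homogeneousSubmodule [Fintype σ] (R : Type*) [CommRing R] [Nontrivial R]
    (m : ℕ) :
    Module.finrank R (homogeneousSubmodule σ R m) = (Fintype.card σ + m - 1).choose m := by
  classical
  have hdeg : {d : σ →₀ ℕ | d.degree = m} =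
      ↑(Finset.univ.finsuppAntidiag m : Finset (σ →₀ ℕ)) := by
    ext d
    simp [degree_eq_sum]
  rw [homogeneousSubmodule_eq_finsupp_supported, hdeg,
    (AddMonoidAlgebra.supportedEquivFinsupp _).finrank_eq, Module.finrank_finsupp_self]
  simp only [Finset.coe_sort_coe, Fintype.card_coe]
  rw [Finset.card_finsuppAntidiag_nat_eq_choose, Finset.card_univ]

variable {R : Type*} [CommSemiring R]

instance [Finite σ] (m : ℕ) : Module.Finite R (homogeneousSubmodule σ R m) :=
  Module.Finite.iff_fg.mpr (homogeneousSubmodule_fg σ R m)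

theorem pderiv_eq_zero_of_isHomogeneous_zero {f : MvPolynomial σ R} (hf : f.IsHomogeneous 0)
    (i : σ) : pderiv i f = 0 := by
  rw [← totalDegree_zero_iff_isHomogeneous, totalDegree_eq_zero_iff_eq_C] at hf
  rw [hf, pderiv_C]

section Laplacian

variable [Fintype σ]

variable (σ R) in
def laplacian : MvPolynomial σ R →ₗ[R] MvPolynomial σ R :=
  ∑ j : σ, (pderiv j).toLinearMap ∘ₗ (pderiv j).toLinearMap

theorem laplacian_apply (f : MvPolynomial σ R) :
    laplacian σ R f = ∑ j, pderiv j (pderiv j f) := by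
  simp [laplacian]

theorem laplacian_monomial (d : σ →₀ ℕ) (r : R) :
    laplacian σ R (monomial d r) =
      ∑ j, monomial (d - single j 2) (r * ((d j * (d j - 1) : ℕ) : R)) := by
  refine (laplacian_apply _).trans (Finset.sum_congr rfl fun j _ => ?_)
  rw [pderiv_monomial, pderiv_monomial, tsub_tsub, ← single_add, tsub_apply,
    single_eq_same, Nat.cast_mul, mul_assoc]

namespace IsHomogeneous

variable {f : MvPolynomial σ R} {m : ℕ}

protected theorem laplacian (hf : f.IsHomogeneous m) :
    (laplacian σ R f).IsHomogeneous (m - 2) := by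
  rw [laplacian_apply]
  exact IsHomogeneous.sum _ _ _ fun j _ => by
    simpa [Nat.sub_sub] using (hf.pderiv (i := j)).pderiv (i := j)

theorem laplacian_pow (hf : f.IsHomogeneous m) (p : ℕ) :
    ((laplacian σ R ^ p) f).IsHomogeneous (m - 2 * p) := by
  induction p with
  | zero => simpa using hf
  | succ p ih =>
    rw [pow_succ', Module.End.mul_apply]
    simpa [Nat.sub_sub, mul_add] using ih.laplacian

theorem laplacian_eq_zero (hf : f.IsHomogeneous m) (hm : m < 2) : laplacian σ R f = 0 := by
  rw [laplacian_apply]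
  refine Finset.sum_eq_zero fun j _ => pderiv_eq_zero_of_isHomogeneous_zero ?_ j
  simpa [show m - 1 = 0 by omega] using hf.pderiv (i := j)

theorem laplacian_pow_eq_zero {p : ℕ} (hf : f.IsHomogeneous m) (hm : m < 2 * p) :
    (laplacian σ R ^ p) f = 0 := by
  obtain ⟨p, rfl⟩ : ∃ q, p = q + 1 := ⟨p - 1, by omega⟩
  rw [pow_succ', Module.End.mul_apply]
  exact (hf.laplacian_pow p).laplacian_eq_zero (by omega)

end IsHomogeneous

variable {K : Type*} [Field K] [CharZero K]

theorem monomial_mem_map_laplacian (i : σ) {m : ℕ} (β : σ →₀ ℕ) (hβ : β.degree = m) :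
    monomial β (1 : K) ∈ (homogeneousSubmodule σ K (m + 2)).map (laplacian σ K) := by
  classical
  set S := (homogeneousSubmodule σ K (m + 2)).map (laplacian σ K)
  have smul_mem {γ : σ →₀ ℕ} (c : K) (h : monomial γ (1 : K) ∈ S) : monomial γ c ∈ S := by
    simpa [smul_monomial] using S.smul_mem c h
  set d := β + single i 2
  have hdeg : d.degree = m + 2 := by simp [d, hβ]
  have hd : laplacian σ K (monomial d (1 : K)) ∈ S :=
    Submodule.mem_map_of_mem (isHomogeneous_monomial _ hdeg)
  rw [laplacian_monomial, ← Finset.add_sum_erase _ _ (Finset.mem_univ i)] at hd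
  -- every other term has a larger exponent of `X i`: recurse on `m - β i`
  have hrest : ∑ j ∈ Finset.univ.erase i,
      monomial (d - single j 2) ((1 : K) * ((d j * (d j - 1) : ℕ) : K)) ∈ S := by
    refine S.sum_mem fun j hj => ?_
    have hji := Finset.ne_of_mem_erase hj
    have hdj : d j = β j := by simp [d, hji]
    rcases lt_or_ge (β j) 2 with hβj | hβj
    · have : β j * (β j - 1) = 0 := by interval_cases β j <;> rfl
      simp [hdj, this]
    have hγ : (d - single j 2).degree = m := by
      have hle : single j 2 ≤ d := single_le_iff.mpr (hdj ▸ hβj)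
      have := congrArg degree (tsub_add_cancel_of_le hle)
      rw [map_add, degree_single, hdeg] at this
      omega
    have hγi : (d - single j 2 : σ →₀ ℕ) i = β i + 2 := by simp [d, hji]
    have hγle := le_degree i (d - single j 2)
    exact smul_mem _ (monomial_mem_map_laplacian i _ hγ)
  have hβi : monomial β (((β i + 2) * (β i + 1) : ℕ) : K) ∈ S := by
    simpa [d] using (S.add_mem_iff_left hrest).mp hd
  have hc : (((β i + 2) * (β i + 1) : ℕ) : K) ≠ 0 := Nat.cast_ne_zero.mpr (by positivity)
  have := S.smul_mem (((β i + 2) * (β i + 1) : ℕ) : K)⁻¹ hβi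
  rwa [smul_monomial, smul_eq_mul, inv_mul_cancel₀ hc] at this
termination_by m - β i
decreasing_by exact (show m - (d - single j 2 : σ →₀ ℕ) i < m - β i by omega)

theorem homogeneousSubmodule_le_map_laplacian [Nonempty σ] (m : ℕ) :
    homogeneousSubmodule σ K m ≤ (homogeneousSubmodule σ K (m + 2)).map (laplacian σ K) := by
  rw [homogeneousSubmodule_eq_finsupp_supported, AddMonoidAlgebra.supported_eq_span_single,
    Submodule.span_le]
  rintro _ ⟨β, hβ, rfl⟩
  exact monomial_mem_map_laplacian (Classical.arbitrary σ) β hβ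

theorem map_laplacian_pow_homogeneousSubmodule [Nonempty σ] (p m : ℕ) :
    (homogeneousSubmodule σ K (m + 2 * p)).map (laplacian σ K ^ p) =
      homogeneousSubmodule σ K m := by
  refine le_antisymm (Submodule.map_le_iff_le_comap.mpr fun f hf => ?_) ?_
  · simpa using (mem_homogeneousSubmodule _ f).mp hf |>.laplacian_pow p
  induction p generalizing m with
  | zero => simp [Module.End.one_eq_id]
  | succ p ih =>
    calc homogeneousSubmodule σ K m
        ≤ (homogeneousSubmodule σ K (m + 2)).map (laplacian σ K) :=
          homogeneousSubmodule_le_map_laplacian m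
      _ ≤ ((homogeneousSubmodule σ K (m + 2 + 2 * p)).map (laplacian σ K ^ p)).map
            (laplacian σ K) := Submodule.map_mono (ih (m + 2))
      _ = (homogeneousSubmodule σ K (m + 2 * (p + 1))).map (laplacian σ K ^ (p + 1)) := by
          rw [← Submodule.map_comp, ← Module.End.mul_eq_comp, ← pow_succ', add_assoc,
            mul_add_one, add_comm 2]

end Laplacian

end MvPolynomial

theorem Submodule.finrank_map_add_finrank_inf_ker {K V W : Type*} [DivisionRing K]
    [AddCommGroup V] [Module K V] [AddCommGroup W] [Module K W] (f : V →ₗ[K] W)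
    (L : Submodule K V) [FiniteDimensional K L] :
    Module.finrank K (L.map f) + Module.finrank K ↥(L ⊓ LinearMap.ker f) =
      Module.finrank K L := by
  have hker : LinearMap.ker (f.domRestrict L) = (L ⊓ LinearMap.ker f).comap L.subtype := by
    rw [LinearMap.ker_domRestrict, Submodule.comap_inf, Submodule.comap_subtype_self, top_inf_eq]
  rw [← LinearMap.range_domRestrict, ← (Submodule.comapSubtypeEquivOfLe inf_le_left).finrank_eq,
    ← hker, LinearMap.finrank_range_add_finrank_ker]

open MvPolynomial

theorem dim_Hmp_general (n m p : ℕ) (hn : 0 < n) :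
    Module.Finite ℂ (Hmp n m p) ∧
    (m < 2 * p → Module.finrank ℂ (Hmp n m p) = Nat.choose (n + m - 1) (n - 1)) ∧
    (2 * p ≤ m → Module.finrank ℂ (Hmp n m p) =
      Nat.choose (n + m - 1) (n - 1) - Nat.choose (n + m - 2 * p - 1) (n - 1)) := by
  have hHmp : Hmp n m p =
      homogeneousSubmodule (Fin n) ℂ m ⊓ LinearMap.ker (laplacian (Fin n) ℂ ^ p) := rfl
  have finrank_eq (k : ℕ) :
      Module.finrank ℂ (homogeneousSubmodule (Fin n) ℂ k) = (n + k - 1).choose (n - 1) := by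
    rw [finrank_homogeneousSubmodule, Fintype.card_fin]
    exact Nat.choose_symm_of_eq_add (by omega)
  have : Nonempty (Fin n) := Fin.pos_iff_nonempty.mp hn
  refine ⟨Module.Finite.of_injective (Submodule.inclusion inf_le_left)
    (Submodule.inclusion_injective _), fun hlt => ?_, fun hge => ?_⟩
  · rw [hHmp, inf_eq_left.mpr fun f hf => IsHomogeneous.laplacian_pow_eq_zero hf hlt, finrank_eq]
  · obtain ⟨k, rfl⟩ : ∃ k, m = k + 2 * p := ⟨m - 2 * p, by omega⟩
    have := Submodule.finrank_map_add_finrank_inf_ker (laplacian (Fin n) ℂ ^ p)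
      (homogeneousSubmodule (Fin n) ℂ (k + 2 * p))
    rw [map_laplacian_pow_homogeneousSubmodule, ← hHmp, finrank_eq, finrank_eq] at this
    rw [show n + (k + 2 * p) - 2 * p - 1 = n + k - 1 by omega]
    omega

/-- the dimension of `ℋ_m^p(ℂⁿ)`. -/
theorem dim_Hmp (n m p : ℕ) (hn : 0 < n) (hm : 0 < m) (hp : 0 < p) :
    Module.Finite ℂ (Hmp n m p) ∧
    (m < 2 * p → Module.finrank ℂ (Hmp n m p) = Nat.choose (n + m - 1) (n - 1)) ∧
    (2 * p ≤ m → Module.finrank ℂ (Hmp n m p) =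
      Nat.choose (n + m - 1) (n - 1) - Nat.choose (n + m - 2 * p - 1) (n - 1)) :=
  dim_Hmp_general n m p hn

end
end
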